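/- Let S be a commutative semiring, n ≥ 1, and suppose N_1, …, N_m ∈ UT_n(S) satisfy N_1 ⋯ N_m = E_{ij}(x) for some x ∈ S and indices i < j, where E_{ij}(x) is the unitriangular matrix with (i,j) entry x. Then for every pair k < l with (k,l) ≠ (i,j), the (k,l) entries (N_t)_{kl} are additively invertible for all 1 ≤ t ≤ m. -/

import Mathlib

/-- The elementary matrix `E_{ij}(x)`: identity diagonal, `x` in position `(i,j)`,
`0` elsewhere off the diagonal. -/
def Eelt (n : ℕ) (S : Type*) [CommSemiring S] (i j : Fin n) (x : S) :
    Matrix (Fin n) (Fin n) S :=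
  fun k l => if k = l then 1 else if k = i ∧ l = j then x else 0

/-- The diagonal matrix `A_i(y)` with `y` in position `(i,i)` and `1` on the rest of
the diagonal. -/
def Aelt (n : ℕ) (S : Type*) [CommSemiring S] (i : Fin n) (y : S) :
    Matrix (Fin n) (Fin n) S :=
  Matrix.diagonal (fun k => if k = i then y else 1)

/-!
Write the product as `P * N * Q` with `P`, `Q` the products of the factors before and after `N`.
Diagonal entries of upper triangular matrices multiply, so `P k k * N k k * Q k k = 1` and
`P k k`, `Q l l` are units. The `(k,l)` entry of `P * (N * Q)` is `0`; in a sum that is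
additively invertible every summand is, so `P k k * (N * Q) k l` is, hence `(N * Q) k l`
(cancel the unit `P k k`), and in the same way `N k l * Q l l` and then `N k l`.
-/

theorem Finset.isAddUnit_of_isAddUnit_sum {ι M : Type*} [AddCommMonoid M]
    {s : Finset ι} {f : ι → M} (h : IsAddUnit (∑ a ∈ s, f a)) {a : ι} (ha : a ∈ s) :
    IsAddUnit (f a) := by
  classical
  rw [← Finset.add_sum_erase s f ha] at h
  exact isAddUnit_of_add_isAddUnit_left h

section Semiring

variable {R : Type*} [Semiring R] {u a : R}

theorem IsUnit.isAddUnit_of_isAddUnit_mul_left (hu : IsUnit u) (h : IsAddUnit (u * a)) :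
    IsAddUnit a := by
  obtain ⟨v, rfl⟩ := hu
  simpa using h.mul_left ↑v⁻¹

theorem IsUnit.isAddUnit_of_isAddUnit_mul_right (hu : IsUnit u) (h : IsAddUnit (a * u)) :
    IsAddUnit a := by
  obtain ⟨v, rfl⟩ := hu
  simpa using h.mul_right ↑v⁻¹

end Semiring

namespace Matrix

variable {m R : Type*} [Fintype m] [Semiring R] {A B : Matrix m m R} {i j : m}

theorem isAddUnit_apply_of_isAddUnit_mul_apply_left (hA : IsUnit (A i i))
    (h : IsAddUnit ((A * B) i j)) : IsAddUnit (B i j) :=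
  hA.isAddUnit_of_isAddUnit_mul_left (Finset.isAddUnit_of_isAddUnit_sum h (Finset.mem_univ i))

theorem isAddUnit_apply_of_isAddUnit_mul_apply_right (hB : IsUnit (B j j))
    (h : IsAddUnit ((A * B) i j)) : IsAddUnit (A i j) :=
  hB.isAddUnit_of_isAddUnit_mul_right (Finset.isAddUnit_of_isAddUnit_sum h (Finset.mem_univ j))

variable [LinearOrder m]

theorem IsUpperTriangular.mul_apply_self (hA : A.IsUpperTriangular) (hB : B.IsUpperTriangular)
    (i : m) : (A * B) i i = A i i * B i i := by
  refine Finset.sum_eq_single i (fun a _ hai => ?_) (by simp)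
  change A i a * B a i = 0
  rcases hai.lt_or_gt with h | h
  · rw [hA h, zero_mul]
  · rw [hB h, mul_zero]

theorem isUpperTriangular_list_prod [DecidableEq m] {L : List (Matrix m m R)}
    (hL : ∀ N ∈ L, N.IsUpperTriangular) : L.prod.IsUpperTriangular :=
  show L.prod ∈ blockTriangularSubsemiring R id from Subsemiring.list_prod_mem _ hL

end Matrix

theorem stmt7_general (n : ℕ) (S : Type*) [CommSemiring S]
    (L : List (Matrix (Fin n) (Fin n) S))
    (hL : ∀ N ∈ L, ∀ k l : Fin n, l < k → N k l = 0)
    (i j : Fin n) (x : S) (hprod : L.prod = Eelt n S i j x) :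
    ∀ N ∈ L, ∀ k l : Fin n, k < l → (k, l) ≠ (i, j) → IsAddUnit (N k l) := by
  intro N hN k l hkl hne
  obtain ⟨L₁, L₂, rfl⟩ := List.append_of_mem hN
  rw [List.prod_append, List.prod_cons] at hprod
  have hP : L₁.prod.IsUpperTriangular :=
    Matrix.isUpperTriangular_list_prod fun M hM => hL M (by simp [hM])
  have hN' : N.IsUpperTriangular := hL N (by simp)
  have hQ : L₂.prod.IsUpperTriangular :=
    Matrix.isUpperTriangular_list_prod fun M hM => hL M (by simp [hM])
  have hdiag (a : Fin n) : IsUnit (L₁.prod a a * (N a a * L₂.prod a a)) := by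
    rw [← hN'.mul_apply_self hQ, ← hP.mul_apply_self (hN'.mul hQ), hprod]
    simp [Eelt]
  have hzero : IsAddUnit ((L₁.prod * (N * L₂.prod)) k l) := by
    rw [hprod, Eelt, if_neg hkl.ne, if_neg (by simpa [Prod.ext_iff] using hne)]
    exact isAddUnit_zero
  have hNQ : IsAddUnit ((N * L₂.prod) k l) :=
    Matrix.isAddUnit_apply_of_isAddUnit_mul_apply_left (IsUnit.mul_iff.mp (hdiag k)).1 hzero
  exact Matrix.isAddUnit_apply_of_isAddUnit_mul_apply_right
    (IsUnit.mul_iff.mp (IsUnit.mul_iff.mp (hdiag l)).2).2 hNQ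

/-- If a product of upper triangular matrices over a commutative semiring equals
`E_{ij}(x)` (with `i < j`), then for every pair `k < l` with `(k,l) ≠ (i,j)`, the
`(k,l)` entry of each factor is additively invertible. -/
theorem stmt7 (n : ℕ) (S : Type*) [CommSemiring S]
    (L : List (Matrix (Fin n) (Fin n) S))
    (hL : ∀ N ∈ L, ∀ k l : Fin n, l < k → N k l = 0)
    (i j : Fin n) (hij : i < j) (x : S) (hprod : L.prod = Eelt n S i j x) :
    ∀ N ∈ L, ∀ k l : Fin n, k < l → (k, l) ≠ (i, j) → IsAddUnit (N k l) :=
  stmt7_general n S L hL i j x hprod
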